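/- arXiv:2409.09015 — 3 statements merged into one kernel-verified Lean document; each statement's English description precedes it below -/
import Mathlib

section
/- For any set I and any chain {0, e, 1} with 0 < e < 1 made into the p-algebra B̄₁ (with 0* = 1, e* = 1* = 0), and any pair of fields of subsets B₀ ⊆ B ⊆ 𝒫(I) (each a Boolean subalgebra of the powerset), the set P(B, B₀) = {f ∈ {0,e,1}^I : f⁻¹(0) ∈ B₀ and f⁻¹(1) ∈ B} is a subuniverse of the product p-algebra B̄₁^I (closed under coordinatewise meet, join, pseudo-complement, and containing the constant functions 0 and 1). -/
/-!
Under the pointwise operations, the zero set and the top set of the result are Boolean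
combinations of those of the arguments: `min` unites zero sets and intersects top sets, `max`
does the opposite, and `f*` has zero set `(f⁻¹(0))ᶜ` and top set `f⁻¹(0)`.
-/

/-- Pseudo-complement on the three-element chain `B̄₁` (`0 ↦ 0`, `e ↦ 1`, `1 ↦ 2`). -/
def b1star : Fin 3 → Fin 3 := fun x => if x = 0 then 2 else 0

/-- A field of subsets of `I`: contains `∅` and `I`, closed under
complements, intersections and unions. -/
def IsFieldOfSets {I : Type*} (B : Set (Set I)) : Prop :=
  ∅ ∈ B ∧ Set.univ ∈ B ∧ (∀ X ∈ B, Xᶜ ∈ B) ∧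
    (∀ X ∈ B, ∀ Y ∈ B, X ∩ Y ∈ B) ∧ (∀ X ∈ B, ∀ Y ∈ B, X ∪ Y ∈ B)

/-- `P(B, B₀) = {f ∈ {0,e,1}^I : f⁻¹(0) ∈ B₀, f⁻¹(1) ∈ B}`. -/
def PBB {I : Type*} (B B₀ : Set (Set I)) : Set (I → Fin 3) :=
  {f | f ⁻¹' {0} ∈ B₀ ∧ f ⁻¹' {2} ∈ B}

namespace IsFieldOfSets

variable {I : Type*} {B : Set (Set I)} {X Y : Set I}

theorem empty_mem (hB : IsFieldOfSets B) : ∅ ∈ B := hB.1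

theorem univ_mem (hB : IsFieldOfSets B) : Set.univ ∈ B := hB.2.1

theorem compl_mem (hB : IsFieldOfSets B) (hX : X ∈ B) : Xᶜ ∈ B := hB.2.2.1 X hX

theorem inter_mem (hB : IsFieldOfSets B) (hX : X ∈ B) (hY : Y ∈ B) : X ∩ Y ∈ B :=
  hB.2.2.2.1 X hX Y hY

theorem union_mem (hB : IsFieldOfSets B) (hX : X ∈ B) (hY : Y ∈ B) : X ∪ Y ∈ B :=
  hB.2.2.2.2 X hX Y hY

end IsFieldOfSets

section PointwiseMinMax

variable {ι α : Type*} [LinearOrder α] (f g : ι → α)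

theorem preimage_min_bot [OrderBot α] :
    (fun i => min (f i) (g i)) ⁻¹' {⊥} = f ⁻¹' {⊥} ∪ g ⁻¹' {⊥} :=
  Set.ext fun _ => min_eq_bot

theorem preimage_min_top [OrderTop α] :
    (fun i => min (f i) (g i)) ⁻¹' {⊤} = f ⁻¹' {⊤} ∩ g ⁻¹' {⊤} :=
  Set.ext fun _ => min_eq_top

theorem preimage_max_bot [OrderBot α] :
    (fun i => max (f i) (g i)) ⁻¹' {⊥} = f ⁻¹' {⊥} ∩ g ⁻¹' {⊥} :=
  Set.ext fun _ => max_eq_bot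

theorem preimage_max_top [OrderTop α] :
    (fun i => max (f i) (g i)) ⁻¹' {⊤} = f ⁻¹' {⊤} ∪ g ⁻¹' {⊤} :=
  Set.ext fun _ => max_eq_top

end PointwiseMinMax

section B1Star

variable {ι : Type*} (f : ι → Fin 3)

theorem preimage_b1star_zero : (fun i => b1star (f i)) ⁻¹' {0} = (f ⁻¹' {0})ᶜ :=
  Set.ext fun i => by simp [b1star]

theorem preimage_b1star_two : (fun i => b1star (f i)) ⁻¹' {2} = f ⁻¹' {0} :=
  Set.ext fun i => by simp [b1star]

end B1Star

namespace PBB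

variable {I : Type*} {B B₀ : Set (Set I)}

theorem const_zero_mem (hB : IsFieldOfSets B) (hB₀ : IsFieldOfSets B₀) :
    (fun _ => (0 : Fin 3)) ∈ PBB B B₀ :=
  ⟨Set.mem_of_eq_of_mem (Set.preimage_const_of_mem rfl) hB₀.univ_mem,
    Set.mem_of_eq_of_mem (Set.preimage_const_of_notMem (by decide)) hB.empty_mem⟩

theorem const_two_mem (hB : IsFieldOfSets B) (hB₀ : IsFieldOfSets B₀) :
    (fun _ => (2 : Fin 3)) ∈ PBB B B₀ :=
  ⟨Set.mem_of_eq_of_mem (Set.preimage_const_of_notMem (by decide)) hB₀.empty_mem,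
    Set.mem_of_eq_of_mem (Set.preimage_const_of_mem rfl) hB.univ_mem⟩

theorem min_mem (hB : IsFieldOfSets B) (hB₀ : IsFieldOfSets B₀) {f g : I → Fin 3}
    (hf : f ∈ PBB B B₀) (hg : g ∈ PBB B B₀) : (fun i => min (f i) (g i)) ∈ PBB B B₀ :=
  ⟨Set.mem_of_eq_of_mem (preimage_min_bot f g) (hB₀.union_mem hf.1 hg.1),
    Set.mem_of_eq_of_mem (preimage_min_top f g) (hB.inter_mem hf.2 hg.2)⟩

theorem max_mem (hB : IsFieldOfSets B) (hB₀ : IsFieldOfSets B₀) {f g : I → Fin 3}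
    (hf : f ∈ PBB B B₀) (hg : g ∈ PBB B B₀) : (fun i => max (f i) (g i)) ∈ PBB B B₀ :=
  ⟨Set.mem_of_eq_of_mem (preimage_max_bot f g) (hB₀.inter_mem hf.1 hg.1),
    Set.mem_of_eq_of_mem (preimage_max_top f g) (hB.union_mem hf.2 hg.2)⟩

theorem b1star_mem (hB₀ : IsFieldOfSets B₀) (hsub : B₀ ⊆ B) {f : I → Fin 3}
    (hf : f ∈ PBB B B₀) : (fun i => b1star (f i)) ∈ PBB B B₀ :=
  ⟨Set.mem_of_eq_of_mem (preimage_b1star_zero f) (hB₀.compl_mem hf.1),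
    Set.mem_of_eq_of_mem (preimage_b1star_two f) (hsub hf.1)⟩

end PBB

theorem stmt3 {I : Type*} (B B₀ : Set (Set I))
    (hB : IsFieldOfSets B) (hB₀ : IsFieldOfSets B₀) (hsub : B₀ ⊆ B) :
    (fun _ => (0 : Fin 3)) ∈ PBB B B₀ ∧
    (fun _ => (2 : Fin 3)) ∈ PBB B B₀ ∧
    (∀ f ∈ PBB B B₀, ∀ g ∈ PBB B B₀, (fun i => min (f i) (g i)) ∈ PBB B B₀) ∧
    (∀ f ∈ PBB B B₀, ∀ g ∈ PBB B B₀, (fun i => max (f i) (g i)) ∈ PBB B B₀) ∧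
    (∀ f ∈ PBB B B₀, (fun i => b1star (f i)) ∈ PBB B B₀) :=
  ⟨PBB.const_zero_mem hB hB₀, PBB.const_two_mem hB hB₀,
    fun _ hf _ hg => PBB.min_mem hB hB₀ hf hg, fun _ hf _ hg => PBB.max_mem hB hB₀ hf hg,
    fun _ hf => PBB.b1star_mem hB₀ hsub hf⟩
end

section
/- Let G = (V, E) be a finite graph and P_G the poset {∅} ∪ {{v} : v ∈ V} ∪ E ordered by reverse inclusion. For distinct vertices u, v ∈ V, the pair {u, v} is an edge of G if and only if in the lattice Up(P_G) there exists a unique join-irreducible element strictly above both ↑{u} and ↑{v}. -/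
/-- The universe of the poset `P_G = {∅} ∪ {{v} : v ∈ V} ∪ E`. -/
def PGuniv (V : Type*) (E : Set (Set V)) :=
  {S : Set V // S = ∅ ∨ (∃ v, S = {v}) ∨ S ∈ E}

/-- `P_G` ordered by reverse inclusion. -/
instance (V : Type*) (E : Set (Set V)) : PartialOrder (PGuniv V E) where
  le S T := T.1 ⊆ S.1
  le_refl _ := Set.Subset.refl _
  le_trans _ _ _ h1 h2 := Set.Subset.trans h2 h1
  le_antisymm _ _ h1 h2 := Subtype.ext (Set.Subset.antisymm h2 h1)

/-- The top element `∅` of `P_G`. -/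
def topEl (V : Type*) (E : Set (Set V)) : PGuniv V E := ⟨∅, Or.inl rfl⟩

/-- The element `{v}` of `P_G` for a vertex `v`. -/
def vtx {V : Type*} (E : Set (Set V)) (v : V) : PGuniv V E :=
  ⟨{v}, Or.inr (Or.inl ⟨v, rfl⟩)⟩

/-- Join-irreducibility in the lattice of upsets of `P_G`. -/
def JoinIrrUp {V : Type*} (E : Set (Set V)) (X : Set (PGuniv V E)) : Prop :=
  X ≠ ∅ ∧ ∀ A B : Set (PGuniv V E), IsUpperSet A → IsUpperSet B →
    X = A ∪ B → X = A ∨ X = B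

/-! In the finite poset `P_G` the join-irreducible upsets are exactly the principal ones `↑p`
(Birkhoff). Now `↑p ⊋ ↑{u}, ↑{v}` means `p ⊋ {u}, {v}`, and among `∅`, singletons and
two-element edges only `p = {u, v}` qualifies; such a `p` exists iff `{u, v} ∈ E`. -/

open Set

lemma Set.pair_ne_singleton {α : Type*} {u v : α} (huv : u ≠ v) (w : α) :
    ({u, v} : Set α) ≠ {w} := by
  intro h
  have hu : u ∈ ({w} : Set α) := h ▸ mem_insert u {v}
  have hv : v ∈ ({w} : Set α) := h ▸ mem_insert_of_mem u (mem_singleton v)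
  exact huv (hu.trans hv.symm)

lemma Set.singleton_ssubset_pair {α : Type*} {u v : α} (huv : u ≠ v) :
    ({u} : Set α) ⊂ {u, v} :=
  (ssubset_iff_of_subset (singleton_subset_iff.2 (mem_insert u {v}))).2
    ⟨v, mem_insert_of_mem u (mem_singleton v), huv.symm⟩

namespace PGuniv

variable {V : Type*} {E : Set (Set V)}

instance [Finite V] : Finite (PGuniv V E) := Subtype.finite

lemma lt_vtx_iff {p : PGuniv V E} {u : V} : p < vtx E u ↔ {u} ⊂ p.1 := Iff.rfl

/-- Mathlib orders `UpperSet` by reverse inclusion, so joins in `Up(P_G)` are infima there. -/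
lemma joinIrrUp_iff_infIrred {X : Set (PGuniv V E)} (hX : IsUpperSet X) :
    JoinIrrUp E X ↔ InfIrred (⟨X, hX⟩ : UpperSet (PGuniv V E)) := by
  rw [InfIrred, isMax_iff_eq_top, JoinIrrUp, ne_eq, ← UpperSet.coe_eq_empty]
  refine and_congr_right fun _ => ⟨fun h A B hAB => ?_, fun h A B hA hB hAB => ?_⟩
  · simpa [SetLike.ext'_iff, eq_comm] using h A B A.upper B.upper (congrArg SetLike.coe hAB).symm
  · simpa [SetLike.ext'_iff, eq_comm] using @h ⟨A, hA⟩ ⟨B, hB⟩ (SetLike.coe_injective hAB.symm)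

lemma isUpperSet_and_joinIrrUp_iff [Finite V] {X : Set (PGuniv V E)} :
    IsUpperSet X ∧ JoinIrrUp E X ↔ ∃ p, X = Ici p := by
  refine ⟨fun ⟨hX, hJ⟩ => ?_, ?_⟩
  · obtain ⟨p, hp⟩ := UpperSet.infIrred_iff_of_finite.1 ((joinIrrUp_iff_infIrred hX).1 hJ)
    exact ⟨p, (congrArg SetLike.coe hp).symm⟩
  · rintro ⟨p, rfl⟩
    exact ⟨isUpperSet_Ici p, (joinIrrUp_iff_infIrred _).2 (UpperSet.infIrred_Ici p)⟩

lemma existsUnique_joinIrrUp_iff [Finite V] {Q : Set (PGuniv V E) → Prop} :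
    (∃! X, IsUpperSet X ∧ JoinIrrUp E X ∧ Q X) ↔ ∃! p, Q (Ici p) := by
  simp only [← and_assoc, isUpperSet_and_joinIrrUp_iff]
  constructor
  · rintro ⟨_, ⟨⟨p, rfl⟩, hp⟩, huniq⟩
    exact ⟨p, hp, fun q hq => Ici_injective (huniq _ ⟨⟨q, rfl⟩, hq⟩)⟩
  · rintro ⟨p, hp, huniq⟩
    exact ⟨Ici p, ⟨⟨p, rfl⟩, hp⟩, by rintro _ ⟨⟨q, rfl⟩, hq⟩; rw [huniq q hq]⟩

lemma lt_vtx_and_lt_vtx_iff (hE : ∀ s ∈ E, ∃ u v : V, u ≠ v ∧ s = {u, v})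
    {u v : V} (huv : u ≠ v) (p : PGuniv V E) :
    p < vtx E u ∧ p < vtx E v ↔ p.1 = {u, v} := by
  simp only [lt_vtx_iff]
  refine ⟨fun ⟨hu, hv⟩ => ?_, ?_⟩
  · have hu := singleton_subset_iff.1 hu.subset
    have hv := singleton_subset_iff.1 hv.subset
    rcases p with ⟨s, rfl | ⟨w, rfl⟩ | hs⟩
    · exact absurd hu (notMem_empty u)
    · exact absurd ((mem_singleton_iff.1 hu).trans (mem_singleton_iff.1 hv).symm) huv
    · obtain ⟨a, b, -, rfl⟩ := hE s hs
      simp only [mem_insert_iff, mem_singleton_iff] at hu hv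
      rcases hu with rfl | rfl <;> rcases hv with rfl | rfl
      exacts [absurd rfl huv, rfl, pair_comm _ _, absurd rfl huv]
  · intro hp
    rw [hp]
    exact ⟨singleton_ssubset_pair huv, pair_comm v u ▸ singleton_ssubset_pair huv.symm⟩

lemma existsUnique_val_eq_pair_iff {u v : V} (huv : u ≠ v) :
    (∃! p : PGuniv V E, p.1 = {u, v}) ↔ ({u, v} : Set V) ∈ E := by
  refine ⟨?_, fun h => ⟨⟨{u, v}, Or.inr (Or.inr h)⟩, rfl, fun q hq => Subtype.ext hq⟩⟩
  rintro ⟨⟨s, hs⟩, rfl, -⟩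
  rcases hs with h | ⟨w, h⟩ | h
  · exact absurd h (insert_nonempty u {v}).ne_empty
  · exact absurd h (pair_ne_singleton huv w)
  · exact h

end PGuniv

/-- For distinct vertices `u, v`, `{u, v}` is an edge of `G` iff in `Up(P_G)` there is
a unique join-irreducible upset strictly above both `↑{u}` and `↑{v}`. -/
theorem stmt14 (V : Type*) [Fintype V] (E : Set (Set V))
    (hE : ∀ s ∈ E, ∃ u v : V, u ≠ v ∧ s = {u, v})
    (u v : V) (huv : u ≠ v) :
    ({u, v} : Set V) ∈ E ↔
      ∃! X : Set (PGuniv V E),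
        IsUpperSet X ∧ JoinIrrUp E X ∧
          Set.Ici (vtx E u) ⊂ X ∧ Set.Ici (vtx E v) ⊂ X := by
  rw [PGuniv.existsUnique_joinIrrUp_iff]
  simp only [Set.Ici_ssubset_Ici, PGuniv.lt_vtx_and_lt_vtx_iff hE huv]
  exact (PGuniv.existsUnique_val_eq_pair_iff huv).symm
end

section
/- Every finite p-algebra A is isomorphic to the p-algebra Up(J(A)), where J(A) is the set of join-irreducible elements of A equipped with the dual of the order inherited from A, and Up denotes the p-algebra of upsets with X* = complement of the downward closure of X. The isomorphism sends a ∈ A to {j ∈ J(A) : j ≤_A a}. -/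
/-! In a distributive lattice join-irreducible elements are join-prime, so `a ↦ {j : j ≤ a}`
turns joins into unions, and the join of the join-irreducibles in an upset `X` of `J(A)`
is sent back to `X`. In a finite lattice every element is the join of the join-irreducibles
below it, so the map also reflects the order. For the pseudo-complement, `j ≤ a*` iff
`a ⊓ j = ⊥` iff no join-irreducible lies below both `a` and `j`, i.e. `j` lies outside the
down-closure (in `J(A)`) of `{k : k ≤ a}`. -/

/-- An element of a lattice with bottom is join-irreducible if it is nonzero and is
not a join of two elements unless it equals one of them. -/
def JoinIrrEl {A : Type*} [Lattice A] [OrderBot A] (j : A) : Prop :=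
  j ≠ ⊥ ∧ ∀ a b : A, j = a ⊔ b → j = a ∨ j = b

/-- The poset `J(A)` of join-irreducible elements of `A`, under the dual of the
order inherited from `A`. -/
def JPoset (A : Type*) [Lattice A] [OrderBot A] := {j : A // JoinIrrEl j}

instance (A : Type*) [Lattice A] [OrderBot A] : PartialOrder (JPoset A) where
  le j k := k.1 ≤ j.1
  le_refl _ := le_refl _
  le_trans _ _ _ h1 h2 := le_trans h2 h1
  le_antisymm _ _ h1 h2 := Subtype.ext (le_antisymm h2 h1)

/-- The representation map `a ↦ {j ∈ J(A) : j ≤_A a}`. -/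
def repMap (A : Type*) [Lattice A] [OrderBot A] (a : A) : Set (JPoset A) :=
  {j : JPoset A | j.1 ≤ a}

section Lattice

variable {A : Type*} [Lattice A] [OrderBot A]

theorem joinIrrEl_iff_supIrred {j : A} : JoinIrrEl j ↔ SupIrred j := by
  refine and_congr isMin_iff_eq_bot.not.symm ⟨fun h b c hbc => ?_, fun h b c hbc => ?_⟩
  · exact (h b c hbc.symm).imp Eq.symm Eq.symm
  · exact (h hbc.symm).imp Eq.symm Eq.symm

instance [Finite A] : Finite (JPoset A) := Subtype.finite

theorem JPoset.le_iff {j k : JPoset A} : j ≤ k ↔ k.1 ≤ j.1 := Iff.rfl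

@[simp]
theorem mem_repMap {a : A} {j : JPoset A} : j ∈ repMap A a ↔ j.1 ≤ a := Iff.rfl

theorem isUpperSet_repMap (a : A) : IsUpperSet (repMap A a) :=
  fun _ _ hjk hj => mem_repMap.2 ((JPoset.le_iff.1 hjk).trans hj)

theorem repMap_inf (a b : A) : repMap A (a ⊓ b) = repMap A a ∩ repMap A b := by
  ext j; simp

theorem repMap_bot : repMap A ⊥ = ∅ := by
  ext j; simpa using j.2.1

theorem repMap_top [OrderTop A] : repMap A ⊤ = Set.univ := by
  ext j; simp

variable [WellFoundedLT A]

theorem repMap_subset_repMap_iff {a b : A} : repMap A a ⊆ repMap A b ↔ a ≤ b := by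
  refine ⟨fun h => ?_, fun hab _ hj => le_trans hj hab⟩
  obtain ⟨s, rfl, hs⟩ := exists_supIrred_decomposition a
  exact Finset.sup_le fun j hj =>
    h (a := ⟨j, joinIrrEl_iff_supIrred.2 (hs hj)⟩) (Finset.le_sup (f := id) hj)

theorem repMap_injective : Function.Injective (repMap A) := fun _ _ h =>
  le_antisymm (repMap_subset_repMap_iff.1 h.le) (repMap_subset_repMap_iff.1 h.ge)

theorem repMap_pseudoCompl (star : A → A) (hstar : ∀ x y : A, x ⊓ y = ⊥ ↔ y ≤ star x) (a : A) :
    repMap A (star a) = (↑(lowerClosure (repMap A a)) : Set (JPoset A))ᶜ := by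
  ext j
  have hdisj : j.1 ≤ star a ↔ repMap A a ∩ repMap A j.1 ⊆ ∅ := by
    rw [← hstar, ← repMap_inf, ← repMap_bot, repMap_subset_repMap_iff, le_bot_iff]
  simp [hdisj, Set.subset_def, JPoset.le_iff]

end Lattice

section DistribLattice

variable {A : Type*} [DistribLattice A] [OrderBot A]

theorem JoinIrrEl.supPrime {j : A} (hj : JoinIrrEl j) : SupPrime j :=
  (joinIrrEl_iff_supIrred.1 hj).supPrime

theorem repMap_sup (a b : A) : repMap A (a ⊔ b) = repMap A a ∪ repMap A b := by
  ext j; exact j.2.supPrime.le_sup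

theorem repMap_finset_sup (s : Finset (JPoset A)) :
    repMap A (s.sup Subtype.val) = upperClosure (s : Set (JPoset A)) := by
  ext k
  refine k.2.supPrime.le_finset_sup.trans ?_
  simp [JPoset.le_iff]

theorem exists_repMap_eq_of_isUpperSet [Finite A] {X : Set (JPoset A)} (hX : IsUpperSet X) :
    ∃ a : A, repMap A a = X :=
  ⟨X.toFinite.toFinset.sup Subtype.val, by
    rw [repMap_finset_sup, Set.Finite.coe_toFinset, hX.upperClosure]⟩

end DistribLattice

/-- Every finite p-algebra `A` is isomorphic to `Up(J(A))` via `a ↦ {j ∈ J(A) : j ≤ a}`: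
the map is a bijection onto the upsets of `J(A)` carrying `⊓, ⊔, ⊥, ⊤` and the
pseudo-complement to `∩, ∪, ∅, univ` and `X ↦ (↓X)ᶜ`. -/
theorem stmt15 (A : Type*) [DistribLattice A] [BoundedOrder A] [Fintype A]
    (star : A → A) (hstar : ∀ x y : A, x ⊓ y = ⊥ ↔ y ≤ star x) :
    (∀ a : A, IsUpperSet (repMap A a)) ∧
    Function.Injective (repMap A) ∧
    (∀ X : Set (JPoset A), IsUpperSet X → ∃ a : A, repMap A a = X) ∧
    (∀ a b : A, repMap A (a ⊓ b) = repMap A a ∩ repMap A b) ∧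
    (∀ a b : A, repMap A (a ⊔ b) = repMap A a ∪ repMap A b) ∧
    repMap A ⊥ = (∅ : Set (JPoset A)) ∧
    repMap A ⊤ = (Set.univ : Set (JPoset A)) ∧
    (∀ a : A, repMap A (star a) =
      (↑(lowerClosure (repMap A a)) : Set (JPoset A))ᶜ) :=
  ⟨isUpperSet_repMap, repMap_injective, fun _ => exists_repMap_eq_of_isUpperSet, repMap_inf,
    repMap_sup, repMap_bot, repMap_top, repMap_pseudoCompl star hstar⟩
end
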